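/- Let (x_m) and (y_m) be sequences of non-negative integers with x_m < y_m for all m and y_m → ∞, and let (e_m), (g_m) be sequences of non-negative reals with R_m = Σ_{v = x_m+1}^{y_m} e_v · g_{y_m − v} > 0 for all m. Let f : ℝ → ℝ be uniformly continuous on ℝ and let (Y_n) be a sequence of random variables that is deferred Nörlund statistically convergent in probability to a random variable Y. Then the sequence (f(Y_n)) is deferred Nörlund statistically convergent in probability to f(Y). -/

import Mathlib

/-!
Uniform continuity of `f` gives, for each `ε > 0`, an `η > 0` with
`{ε ≤ |f (Y n) - f V|} ⊆ {η ≤ |Y n - V|}`. As the weights `e (y m - n) * g n` are nonnegative,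
every exceptional index set for `f ∘ Y` at level `(ε, δ)` lies inside the one for `Y` at level
`(η, δ)`, and deferred Nörlund density zero passes to subsets.
-/

open MeasureTheory Filter

/-- The deferred Nörlund normalizing sum `R_m = ∑_{v=x_m+1}^{y_m} e_v g_{y_m - v}`. -/
noncomputable def Rm (x y : ℕ → ℕ) (e g : ℕ → ℝ) (m : ℕ) : ℝ :=
  ∑ v ∈ Finset.Ioc (x m) (y m), e v * g (y m - v)

/-- The family of sets `{n : n ≤ R_m and A m n}` has deferred Nörlund density zero. -/
def DNZero (x y : ℕ → ℕ) (e g : ℕ → ℝ) (A : ℕ → ℕ → Prop) : Prop :=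
  Tendsto
    (fun m => (Nat.card {n : ℕ | (n : ℝ) ≤ Rm x y e g m ∧ A m n} : ℝ) / Rm x y e g m)
    atTop (nhds 0)

/-- Deferred Nörlund statistical convergence in probability of `(Y n)` to `Z`. -/
def StDNP {Ω : Type*} [MeasurableSpace Ω] (μ : Measure Ω)
    (x y : ℕ → ℕ) (e g : ℕ → ℝ) (Y : ℕ → Ω → ℝ) (Z : Ω → ℝ) : Prop :=
  ∀ ε > (0 : ℝ), ∀ δ > (0 : ℝ),
    DNZero x y e g
      (fun m n => δ ≤ e (y m - n) * g n * (μ {ω | ε ≤ |Y n ω - Z ω|}).toReal)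

lemma finite_setOf_natCast_le_and (r : ℝ) (p : ℕ → Prop) :
    {n : ℕ | (n : ℝ) ≤ r ∧ p n}.Finite :=
  (Set.finite_Iic ⌊r⌋₊).subset fun _ hn => Nat.le_floor hn.1

lemma setOf_natCast_le_and_eq_empty {r : ℝ} (hr : r < 0) (p : ℕ → Prop) :
    {n : ℕ | (n : ℝ) ≤ r ∧ p n} = ∅ :=
  Set.eq_empty_of_forall_notMem fun n hn => (hn.1.trans_lt hr).not_ge n.cast_nonneg

lemma natCard_setOf_natCast_le_and_div_nonneg (r : ℝ) (p : ℕ → Prop) :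
    0 ≤ (Nat.card {n : ℕ | (n : ℝ) ≤ r ∧ p n} : ℝ) / r := by
  rcases lt_or_ge r 0 with hr | hr
  · simp [setOf_natCast_le_and_eq_empty hr]
  · positivity

lemma natCard_setOf_natCast_le_and_div_mono (r : ℝ) {p q : ℕ → Prop}
    (hpq : ∀ n, p n → q n) :
    (Nat.card {n : ℕ | (n : ℝ) ≤ r ∧ p n} : ℝ) / r ≤
      (Nat.card {n : ℕ | (n : ℝ) ≤ r ∧ q n} : ℝ) / r := by
  rcases lt_or_ge r 0 with hr | hr
  · simp [setOf_natCast_le_and_eq_empty hr]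
  · refine div_le_div_of_nonneg_right ?_ hr
    exact_mod_cast Nat.card_mono (finite_setOf_natCast_le_and r q)
      fun n (hn : _ ∧ _) => ⟨hn.1, hpq n hn.2⟩

lemma DNZero.mono {x y : ℕ → ℕ} {e g : ℕ → ℝ} {A B : ℕ → ℕ → Prop}
    (hAB : ∀ m n, A m n → B m n) (hB : DNZero x y e g B) : DNZero x y e g A :=
  squeeze_zero (fun _ => natCard_setOf_natCast_le_and_div_nonneg _ _)
    (fun m => natCard_setOf_natCast_le_and_div_mono _ (hAB m)) hB

lemma UniformContinuous.exists_pos_le_abs_sub_of_le_abs_sub {f : ℝ → ℝ}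
    (hf : UniformContinuous f) {ε : ℝ} (hε : 0 < ε) :
    ∃ η > 0, ∀ a b, ε ≤ |f a - f b| → η ≤ |a - b| := by
  obtain ⟨η, hη, hfη⟩ := Metric.uniformContinuous_iff.mp hf ε hε
  refine ⟨η, hη, fun a b hab => ?_⟩
  contrapose! hab
  exact hfη hab

theorem stmt_6_general {Ω : Type*} [MeasurableSpace Ω] (μ : Measure Ω) [IsProbabilityMeasure μ]
    (x y : ℕ → ℕ) (e g : ℕ → ℝ)
    (he : ∀ m, 0 ≤ e m) (hg : ∀ m, 0 ≤ g m)
    (f : ℝ → ℝ) (hf : UniformContinuous f)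
    (Y : ℕ → Ω → ℝ) (V : Ω → ℝ)
    (hY : StDNP μ x y e g Y V) :
    StDNP μ x y e g (fun n ω => f (Y n ω)) (fun ω => f (V ω)) := by
  intro ε hε δ hδ
  obtain ⟨η, hη, hfη⟩ := hf.exists_pos_le_abs_sub_of_le_abs_sub hε
  refine (hY η hη δ hδ).mono fun m n h => h.trans ?_
  refine mul_le_mul_of_nonneg_left ?_ (mul_nonneg (he _) (hg _))
  exact ENNReal.toReal_mono (measure_ne_top μ _)
    (measure_mono fun ω hω => hfη (Y n ω) (V ω) hω)

/-- If `f : ℝ → ℝ` is uniformly continuous and `(Y n)` is St_DNP-convergent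
to `V`, then `(f ∘ Y n)` is St_DNP-convergent to `f ∘ V`. -/
theorem stmt_6 {Ω : Type*} [MeasurableSpace Ω] (μ : Measure Ω) [IsProbabilityMeasure μ]
    (x y : ℕ → ℕ) (e g : ℕ → ℝ)
    (hxy : ∀ m, x m < y m) (hy : Tendsto y atTop atTop)
    (he : ∀ m, 0 ≤ e m) (hg : ∀ m, 0 ≤ g m)
    (hR : ∀ m, 0 < Rm x y e g m)
    (f : ℝ → ℝ) (hf : UniformContinuous f)
    (Y : ℕ → Ω → ℝ) (V : Ω → ℝ)
    (hYmeas : ∀ n, Measurable (Y n)) (hVmeas : Measurable V)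
    (hY : StDNP μ x y e g Y V) :
    StDNP μ x y e g (fun n ω => f (Y n ω)) (fun ω => f (V ω)) :=
  stmt_6_general μ x y e g he hg f hf Y V hY
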